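/- Let B = (M₁, F₁) be a complete deterministic Büchi acceptor and U = (M₂, 𝓕) a complete deterministic Muller acceptor over the same finite alphabet, both with finite state sets. Then ⟦B⟧ ⊆ ⟦U⟧ if and only if there is no reachable SCC C of the product automaton M₁ × M₂ such that π₁(C) ∩ F₁ ≠ ∅ and π₂(C) ∉ 𝓕. -/

import Mathlib

/-!
The states that the product run on `w` visits infinitely often form a reachable SCC `C`, and
since both state sets are finite, `π₁ C` and `π₂ C` are the infinity sets of the two component
runs; so a word accepted by `B` but not by `U` yields a forbidden SCC. Conversely, in a reachable
SCC `C` one glues detours through all states of `C` into a loop `v`; if `u` reaches the loop, the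
product run on `u v^ω` visits exactly `C` infinitely often, which gives a counterexample.
-/

open Filter

/-- Extended transition function: `dstar δ q x` is the state reached from `q` reading `x`. -/
def dstar {Q A : Type*} (δ : Q → A → Q) (q : Q) (x : List A) : Q := x.foldl δ q

/-- The run of a deterministic automaton on an ω-word from state `q`. -/
def run {Q A : Type*} (δ : Q → A → Q) (q : Q) (w : ℕ → A) : ℕ → Q
  | 0 => q
  | n + 1 => δ (run δ q w n) (w n)

/-- The set of states visited infinitely often by the run on `w` from `q`. -/
def infOcc {Q A : Type*} (δ : Q → A → Q) (q : Q) (w : ℕ → A) : Set Q :=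
  {p | ∃ᶠ n in atTop, run δ q w n = p}

/-- `C` is a strongly connected component of the automaton with transitions `δ`. -/
def IsSCC {Q A : Type*} (δ : Q → A → Q) (C : Set Q) : Prop :=
  C.Nonempty ∧ ∀ q₁ ∈ C, ∀ q₂ ∈ C, ∃ x : List A, x ≠ [] ∧ dstar δ q₁ x = q₂ ∧
    ∀ x', x' <+: x → dstar δ q₁ x' ∈ C

/-- `q` is reachable from the initial state `qι`. -/
def Reachable {Q A : Type*} (δ : Q → A → Q) (qι q : Q) : Prop :=
  ∃ x : List A, dstar δ qι x = q

/-- The ultimately periodic ω-word `u(v)^ω`. -/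
def upWord {A : Type*} (u v : List A) (hv : v ≠ []) : ℕ → A := fun n =>
  if h : n < u.length then u[n]
  else v[(n - u.length) % v.length]'(Nat.mod_lt _ (List.length_pos_iff.mpr hv))

/-- The transition function of the product automaton. -/
def prodStep {Q₁ Q₂ A : Type*} (δ₁ : Q₁ → A → Q₁) (δ₂ : Q₂ → A → Q₂) :
    Q₁ × Q₂ → A → Q₁ × Q₂ := fun p a => (δ₁ p.1 a, δ₂ p.2 a)

/-- The ω-word `x·z` obtained by prepending the finite word `x` to `z`. -/
def prepend {A : Type*} (x : List A) (z : ℕ → A) : ℕ → A := fun n =>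
  if h : n < x.length then x[n] else z (n - x.length)

section Frequently
variable {α β : Type*}

lemma setOf_frequently_eq_range_of_periodic {s : ℕ → α} {c : ℕ}
    (hs : Function.Periodic s c) (hc : 0 < c) : {a | ∃ᶠ n in atTop, s n = a} = Set.range s := by
  refine Set.Subset.antisymm (fun a ha => ha.exists) ?_
  rintro _ ⟨k, rfl⟩
  refine frequently_atTop.2 fun N => ⟨k + N * c, ?_, hs.nat_mul N k⟩
  nlinarith

variable [Finite α] {ι : Type*} {l : Filter ι} (s : ι → α)

lemma image_setOf_frequently_eq (g : α → β) :
    g '' {a | ∃ᶠ n in l, s n = a} = {b | ∃ᶠ n in l, g (s n) = b} := by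
  ext b
  constructor
  · rintro ⟨a, ha, rfl⟩
    exact ha.mono fun n hn => by rw [hn]
  · intro hb
    have : ∃ᶠ n in l, ∃ a, g a = b ∧ s n = a := hb.mono fun n hn => ⟨s n, hn, rfl⟩
    obtain ⟨a, ha⟩ := frequently_exists.1 this
    exact ⟨a, (frequently_and_distrib_left.1 ha).2, (frequently_and_distrib_left.1 ha).1⟩

lemma setOf_frequently_nonempty [l.NeBot] : {a | ∃ᶠ n in l, s n = a}.Nonempty :=
  frequently_exists.1 (Frequently.of_forall fun n => ⟨s n, rfl⟩)

lemma eventually_mem_setOf_frequently : ∀ᶠ n in l, s n ∈ {a | ∃ᶠ n in l, s n = a} := by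
  by_contra h
  have : ∃ᶠ n in l, ∃ a, ¬ (∃ᶠ n in l, s n = a) ∧ s n = a :=
    (not_eventually.1 h).mono fun n hn => ⟨s n, hn, rfl⟩
  obtain ⟨a, ha⟩ := frequently_exists.1 this
  exact (frequently_and_distrib_left.1 ha).1 (frequently_and_distrib_left.1 ha).2
end Frequently

section Run
variable {Q A : Type*} (δ : Q → A → Q)

lemma dstar_append (q : Q) (x y : List A) : dstar δ q (x ++ y) = dstar δ (dstar δ q x) y :=
  List.foldl_append ..

lemma dstar_concat (q : Q) (x : List A) (a : A) : dstar δ q (x ++ [a]) = δ (dstar δ q x) a := by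
  rw [dstar_append]; rfl

lemma dstar_map_range (q : Q) (w : ℕ → A) (n : ℕ) :
    dstar δ q ((List.range n).map w) = run δ q w n := by
  induction n with
  | zero => rfl
  | succ n ih => rw [List.range_succ, List.map_append, dstar_append, ih]; rfl

lemma run_add (q : Q) (w : ℕ → A) (m n : ℕ) :
    run δ q w (m + n) = run δ (run δ q w m) (fun k => w (m + k)) n := by
  induction n with
  | zero => rfl
  | succ n ih => rw [← add_assoc, run, ih]; rfl

lemma run_prepend (q : Q) (x : List A) (z : ℕ → A) (n : ℕ) :
    run δ q (prepend x z) (x.length + n) = run δ (dstar δ q x) z n := by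
  have hx : (List.range x.length).map (prepend x z) = x :=
    List.ext_getElem (by simp) fun i hi _ => by simp_all [prepend]
  rw [run_add, ← dstar_map_range δ q _ x.length, hx]
  congr 1
  funext k
  simp [prepend]

lemma infOcc_prepend (q : Q) (x : List A) (z : ℕ → A) :
    infOcc δ q (prepend x z) = infOcc δ (dstar δ q x) z := by
  ext p
  change (∃ᶠ n in atTop, _) ↔ ∃ᶠ n in atTop, _
  simp_rw [← run_prepend δ q x z, add_comm x.length]
  conv_lhs => rw [← map_add_atTop_eq_nat x.length, frequently_map]

lemma reachable_of_mem_infOcc {q p : Q} {w : ℕ → A} (hp : p ∈ infOcc δ q w) :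
    Reachable δ q p :=
  let ⟨n, hn⟩ := hp.exists
  ⟨(List.range n).map w, by rw [dstar_map_range, hn]⟩

lemma infOcc_isSCC [Finite Q] (q : Q) (w : ℕ → A) : IsSCC δ (infOcc δ q w) := by
  refine ⟨setOf_frequently_nonempty _, fun p₁ hp₁ p₂ hp₂ => ?_⟩
  obtain ⟨N, hN⟩ := eventually_atTop.1 (eventually_mem_setOf_frequently (run δ q w))
  obtain ⟨m, hm, rfl⟩ := frequently_atTop.1 hp₁ N
  obtain ⟨n, hn, rfl⟩ := frequently_atTop.1 hp₂ (m + 1)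
  have hseg : ∀ k, dstar δ (run δ q w m) ((List.range k).map fun i => w (m + i)) =
      run δ q w (m + k) := fun k => by rw [dstar_map_range, run_add]
  refine ⟨(List.range (n - m)).map fun i => w (m + i), by simp; omega, ?_, fun x hx => ?_⟩
  · rw [hseg, Nat.add_sub_cancel' (by omega)]
  · have hk := hx.length_le
    rw [List.length_map, List.length_range] at hk
    rw [List.prefix_iff_eq_take.1 hx, ← List.map_take, List.take_range, Nat.min_eq_left hk, hseg]
    exact hN _ (by omega)
end Run

section Loops
variable {Q A : Type*} {δ : Q → A → Q}

variable (δ) in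
def visited (p : Q) (v : List A) : Set Q := {s | ∃ x, x <+: v ∧ dstar δ p x = s}

lemma dstar_mem_visited (p : Q) (v : List A) : dstar δ p v ∈ visited δ p v :=
  ⟨v, List.prefix_refl v, rfl⟩

lemma visited_append (p : Q) (x y : List A) :
    visited δ p (x ++ y) = visited δ p x ∪ visited δ (dstar δ p x) y := by
  ext s
  constructor
  · rintro ⟨z, hz, rfl⟩
    rw [List.prefix_iff_eq_take.1 hz]
    rcases le_or_gt z.length x.length with h | h
    · exact .inl ⟨_, List.take_prefix _ _, by rw [List.take_append_of_le_length h]⟩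
    · refine .inr ⟨_, List.take_prefix (z.length - x.length) y, ?_⟩
      rw [List.take_append, List.take_of_length_le h.le, dstar_append]
  · rintro (⟨z, hz, rfl⟩ | ⟨z, hz, rfl⟩)
    · exact ⟨z, hz.trans (List.prefix_append x y), rfl⟩
    · exact ⟨x ++ z, (List.prefix_append_right_inj x).2 hz, dstar_append δ p x z⟩

lemma exists_loop_visiting {C : Set Q} (hC : IsSCC δ C) {p : Q} (hp : p ∈ C) {S : Set Q}
    (hS : S.Finite) (hSC : S ⊆ C) :
    ∃ v : List A, v ≠ [] ∧ dstar δ p v = p ∧ S ⊆ visited δ p v ∧ visited δ p v ⊆ C := by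
  induction S, hS using Set.Finite.induction_on with
  | empty =>
    obtain ⟨v, hv, hloop, hvC⟩ := hC.2 p hp p hp
    exact ⟨v, hv, hloop, Set.empty_subset _, fun _ ⟨x, hx, hs⟩ => hs ▸ hvC x hx⟩
  | @insert a S _ _ ih =>
    obtain ⟨v, hv, hloop, hSv, hvC⟩ := ih ((Set.subset_insert a S).trans hSC)
    have ha : a ∈ C := hSC (Set.mem_insert a S)
    obtain ⟨x, -, hx, hxC⟩ := hC.2 p hp a ha
    obtain ⟨y, -, hy, hyC⟩ := hC.2 a ha p hp
    refine ⟨x ++ y ++ v, by simp [hv], by rw [dstar_append, dstar_append, hx, hy, hloop], ?_, ?_⟩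
    all_goals rw [visited_append, visited_append, dstar_append, hx, hy]
    · refine Set.insert_subset (.inl (.inl (hx ▸ dstar_mem_visited p x))) (hSv.trans ?_)
      exact Set.subset_union_right
    · refine Set.union_subset (Set.union_subset ?_ ?_) hvC
      · rintro _ ⟨z, hz, rfl⟩; exact hxC z hz
      · rintro _ ⟨z, hz, rfl⟩; exact hyC z hz

def periodicWord (v : List A) (hv : v ≠ []) : ℕ → A := fun n =>
  v[n % v.length]'(Nat.mod_lt _ (List.length_pos_iff.mpr hv))

lemma run_periodicWord {v : List A} (hv : v ≠ []) {p : Q} (hloop : dstar δ p v = p) (n : ℕ) :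
    run δ p (periodicWord v hv) n = dstar δ p (v.take (n % v.length)) := by
  have hlen : 0 < v.length := List.length_pos_iff.mpr hv
  induction n with
  | zero => simp [run, dstar]
  | succ n ih =>
    rw [run, ih, periodicWord, ← dstar_concat δ, List.take_concat_get', ← Nat.mod_add_mod]
    rcases (show n % v.length + 1 ≤ v.length from Nat.mod_lt _ hlen).lt_or_eq with h | h
    · rw [Nat.mod_eq_of_lt h]
    · rw [h, Nat.mod_self, List.take_length, hloop, List.take_zero]; rfl

lemma infOcc_periodicWord {v : List A} (hv : v ≠ []) {p : Q} (hloop : dstar δ p v = p) :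
    infOcc δ p (periodicWord v hv) = visited δ p v := by
  have hlen : 0 < v.length := List.length_pos_iff.mpr hv
  have hper : Function.Periodic (run δ p (periodicWord v hv)) v.length := fun n => by
    simp only [run_periodicWord hv hloop, Nat.add_mod_right]
  rw [infOcc, setOf_frequently_eq_range_of_periodic hper hlen]
  ext s
  constructor
  · rintro ⟨n, rfl⟩
    exact ⟨_, List.take_prefix _ _, (run_periodicWord hv hloop n).symm⟩
  · rintro ⟨x, hx, rfl⟩
    rcases hx.length_le.lt_or_eq with h | h
    · refine ⟨x.length, ?_⟩
      rw [run_periodicWord hv hloop, Nat.mod_eq_of_lt h, ← List.prefix_iff_eq_take.1 hx]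
    · exact ⟨0, by rw [hx.eq_of_length h, hloop]; rfl⟩
end Loops

lemma exists_infOcc_eq_of_isSCC {Q A : Type*} [Finite Q] {δ : Q → A → Q} {C : Set Q}
    (hC : IsSCC δ C) {q p : Q} (hp : p ∈ C) (hq : Reachable δ q p) :
    ∃ w : ℕ → A, infOcc δ q w = C := by
  obtain ⟨v, hv, hloop, hCv, hvC⟩ := exists_loop_visiting hC hp C.toFinite subset_rfl
  obtain ⟨u, rfl⟩ := hq
  exact ⟨prepend u (periodicWord v hv), by
    rw [infOcc_prepend, infOcc_periodicWord hv hloop, hCv.antisymm' hvC]⟩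

section Product
variable {Q₁ Q₂ A : Type*} (δ₁ : Q₁ → A → Q₁) (δ₂ : Q₂ → A → Q₂) (q₁ : Q₁) (q₂ : Q₂) (w : ℕ → A)

lemma run_prodStep (n : ℕ) :
    run (prodStep δ₁ δ₂) (q₁, q₂) w n = (run δ₁ q₁ w n, run δ₂ q₂ w n) := by
  induction n with
  | zero => rfl
  | succ n ih => simp [run, ih, prodStep]

variable [Finite Q₁] [Finite Q₂]

lemma image_fst_infOcc_prodStep :
    Prod.fst '' infOcc (prodStep δ₁ δ₂) (q₁, q₂) w = infOcc δ₁ q₁ w := by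
  simp only [infOcc, image_setOf_frequently_eq, run_prodStep]

lemma image_snd_infOcc_prodStep :
    Prod.snd '' infOcc (prodStep δ₁ δ₂) (q₁, q₂) w = infOcc δ₂ q₂ w := by
  simp only [infOcc, image_setOf_frequently_eq, run_prodStep]
end Product

theorem stmt16_general {A Q₁ Q₂ : Type*} [Fintype Q₁] [Fintype Q₂]
    (δ₁ : Q₁ → A → Q₁) (q₁ : Q₁) (F₁ : Set Q₁)
    (δ₂ : Q₂ → A → Q₂) (q₂ : Q₂) (𝓕 : Set (Set Q₂)) :
    {w : ℕ → A | (infOcc δ₁ q₁ w ∩ F₁).Nonempty} ⊆ {w | infOcc δ₂ q₂ w ∈ 𝓕} ↔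
      ¬ ∃ C : Set (Q₁ × Q₂), IsSCC (prodStep δ₁ δ₂) C ∧
        (∀ p ∈ C, Reachable (prodStep δ₁ δ₂) (q₁, q₂) p) ∧
        (Prod.fst '' C ∩ F₁).Nonempty ∧ Prod.snd '' C ∉ 𝓕 := by
  constructor
  · rintro hsub ⟨C, hC, hreach, hF, hU⟩
    obtain ⟨p, hp⟩ := hC.1
    obtain ⟨w, rfl⟩ := exists_infOcc_eq_of_isSCC hC hp (hreach p hp)
    rw [image_fst_infOcc_prodStep] at hF
    rw [image_snd_infOcc_prodStep] at hU
    exact hU (hsub hF)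
  · intro hno w hw
    by_contra hU
    refine hno ⟨_, infOcc_isSCC _ (q₁, q₂) w, fun p hp => reachable_of_mem_infOcc _ hp, ?_, ?_⟩
    · rwa [image_fst_infOcc_prodStep]
    · rwa [image_snd_infOcc_prodStep]

/-- Inclusion of a DBA in a DMA holds iff there is no reachable SCC `C` of the product with
`π₁ C ∩ F₁ ≠ ∅` and `π₂ C ∉ 𝓕`. -/
theorem stmt16 {A Q₁ Q₂ : Type*} [Fintype A] [Fintype Q₁] [Fintype Q₂]
    (δ₁ : Q₁ → A → Q₁) (q₁ : Q₁) (F₁ : Set Q₁)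
    (δ₂ : Q₂ → A → Q₂) (q₂ : Q₂) (𝓕 : Set (Set Q₂)) :
    {w : ℕ → A | (infOcc δ₁ q₁ w ∩ F₁).Nonempty} ⊆ {w | infOcc δ₂ q₂ w ∈ 𝓕} ↔
      ¬ ∃ C : Set (Q₁ × Q₂), IsSCC (prodStep δ₁ δ₂) C ∧
        (∀ p ∈ C, Reachable (prodStep δ₁ δ₂) (q₁, q₂) p) ∧
        (Prod.fst '' C ∩ F₁).Nonempty ∧ Prod.snd '' C ∉ 𝓕 :=
  stmt16_general δ₁ q₁ F₁ δ₂ q₂ 𝓕
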